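/- arXiv:2207.00970 — 2 statements merged into one kernel-verified Lean document; each statement's English description precedes it below -/
import Mathlib

section
/- Let M be a real 3×3 matrix, let F: ℝ³ → ℝ³ be continuous, and let x: ℝ → ℝ³ be twice continuously differentiable with ẍ(t) = M ẋ(t) + F(x(t)) for all t. Then for every t₀ ∈ ℝ and every h ≥ 0 one has the variation-of-constants formulas x(t₀+h) = x(t₀) + h φ₁(hM) ẋ(t₀) + h² ∫₀¹ (1−τ) φ₁((1−τ)hM) F(x(t₀+hτ)) dτ and ẋ(t₀+h) = φ₀(hM) ẋ(t₀) + h ∫₀¹ φ₀((1−τ)hM) F(x(t₀+hτ)) dτ. -/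
open MeasureTheory intervalIntegral

noncomputable section

attribute [local instance] Matrix.linftyOpNormedAddCommGroup Matrix.linftyOpNormedRing
  Matrix.linftyOpNormedAlgebra

abbrev E3 := EuclideanSpace ℝ (Fin 3)

/-- Action of a real 3×3 matrix on `ℝ³`. -/
def mvec (A : Matrix (Fin 3) (Fin 3) ℝ) (v : E3) : E3 := Matrix.toEuclideanLin A v

/-- The matrix φ-functions: `φ₀(Z) = e^Z`, and
`φ_k(Z) = ∫₀¹ e^{(1-σ)Z} σ^{k-1}/(k-1)! dσ` for `k ≥ 1`. -/
def phi (k : ℕ) (Z : Matrix (Fin 3) (Fin 3) ℝ) : Matrix (Fin 3) (Fin 3) ℝ :=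
  if k = 0 then NormedSpace.exp Z
  else ∫ σ in (0:ℝ)..1, (σ ^ (k - 1) / (Nat.factorial (k - 1))) • NormedSpace.exp ((1 - σ) • Z)

/-!
Put `A := toEuclideanCLM M`, `v := ẋ` and `w s := F (x s)`, so that `v' = A v + w`. If an
operator family satisfies `K' = K A + L`, then `s ↦ K (b - s) (v s)` has derivative
`K (b - s) (w s) - L (v s)`, and the fundamental theorem of calculus turns this into an identity.
For `K r = e^{rA}`, `L = 0`, it is Duhamel's formula for `v`. For
`K r = ∫₀ʳ e^{uA} du = r φ₁(rA)`, `L = 1` (because `K r * A + 1 = e^{rA}`), it expresses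
`x b - x a = ∫ₐᵇ v` through `v a` and `w`. The substitution `s = t₀ + h τ` gives the stated
forms.
-/

section IntegralExp

open NormedSpace

variable {𝔸 : Type*} [NormedRing 𝔸] [NormedAlgebra ℝ 𝔸]

def integralExp (A : 𝔸) (r : ℝ) : 𝔸 := ∫ u in (0:ℝ)..r, exp (u • A)

theorem integralExp_zero (A : 𝔸) : integralExp A 0 = 0 := integral_same

theorem integralExp_eq_smul_integral (A : 𝔸) (r : ℝ) :
    integralExp A r = r • ∫ σ in (0:ℝ)..1, exp ((1 - σ) • r • A) := by
  rw [intervalIntegral.integral_comp_sub_left (fun σ => exp (σ • r • A)), sub_self, sub_zero]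
  simp only [smul_smul, mul_comm _ r]
  rw [intervalIntegral.smul_integral_comp_mul_left (fun u => exp (u • A)) r, mul_zero, mul_one]
  rfl

variable [CompleteSpace 𝔸]

theorem continuous_exp_smul (A : 𝔸) : Continuous fun u : ℝ => exp (u • A) :=
  continuous_iff_continuousAt.2 fun u => (hasDerivAt_exp_smul_const A u).continuousAt

theorem hasDerivAt_integralExp (A : 𝔸) (r : ℝ) :
    HasDerivAt (integralExp A) (exp (r • A)) r :=
  ((continuous_exp_smul A).integral_hasStrictDerivAt 0 r).hasDerivAt

theorem integralExp_mul_add_one (A : 𝔸) (r : ℝ) : integralExp A r * A + 1 = exp (r • A) := by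
  have hint : IntervalIntegrable (fun u : ℝ => exp (u • A) * A) volume 0 r :=
    ((continuous_exp_smul A).mul continuous_const).intervalIntegrable 0 r
  have hmul : integralExp A r * A = ∫ u in (0:ℝ)..r, exp (u • A) * A :=
    (((ContinuousLinearMap.mul ℝ 𝔸).flip A).intervalIntegral_comp_comm
      ((continuous_exp_smul A).intervalIntegrable 0 r)).symm
  rw [hmul, integral_eq_sub_of_hasDerivAt (fun u _ => hasDerivAt_exp_smul_const A u) hint,
    zero_smul, exp_zero, sub_add_cancel]

end IntegralExp

section VariationOfConstants

open NormedSpace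

variable {E : Type*} [NormedAddCommGroup E] [NormedSpace ℝ E] [CompleteSpace E]

theorem apply_sub_apply_eq_integral_of_hasDerivAt {K : ℝ → E →L[ℝ] E} {A L : E →L[ℝ] E}
    {v w : ℝ → E} (hK : ∀ r, HasDerivAt K (K r * A + L) r)
    (hv : ∀ s, HasDerivAt v (A (v s) + w s) s) (hw : Continuous w) (a b : ℝ) :
    K 0 (v b) - K (b - a) (v a) = ∫ s in a..b, (K (b - s) (w s) - L (v s)) := by
  have hK_cont : Continuous K := continuous_iff_continuousAt.2 fun r => (hK r).continuousAt
  have hv_cont : Continuous v := continuous_iff_continuousAt.2 fun s => (hv s).continuousAt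
  have hderiv : ∀ s, HasDerivAt (fun s => K (b - s) (v s)) (K (b - s) (w s) - L (v s)) s := by
    intro s
    convert ((hK (b - s)).comp_const_sub b s).clm_apply (hv s) using 1
    simp only [neg_apply, add_apply, mul_apply_eq_comp, map_add]
    abel
  have hint : IntervalIntegrable (fun s => K (b - s) (w s) - L (v s)) volume a b :=
    (((hK_cont.comp (continuous_sub_left b)).clm_apply hw).sub
      (L.continuous.comp hv_cont)).intervalIntegrable a b
  rw [integral_eq_sub_of_hasDerivAt (fun s _ => hderiv s) hint, sub_self]

variable {A : E →L[ℝ] E} {v w : ℝ → E}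

theorem variation_of_constants (hv : ∀ s, HasDerivAt v (A (v s) + w s) s) (hw : Continuous w)
    (a b : ℝ) : v b = exp ((b - a) • A) (v a) + ∫ s in a..b, exp ((b - s) • A) (w s) := by
  have hK : ∀ r : ℝ, HasDerivAt (fun r : ℝ => exp (r • A)) (exp (r • A) * A + 0) r := by
    simpa only [add_zero] using hasDerivAt_exp_smul_const A
  have h := apply_sub_apply_eq_integral_of_hasDerivAt hK hv hw a b
  simp only [zero_smul, exp_zero, zero_apply, sub_zero, one_apply_eq_self] at h
  rw [← h, add_sub_cancel]

theorem integral_variation_of_constants (hv : ∀ s, HasDerivAt v (A (v s) + w s) s)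
    (hw : Continuous w) (a b : ℝ) :
    ∫ s in a..b, v s =
      integralExp A (b - a) (v a) + ∫ s in a..b, integralExp A (b - s) (w s) := by
  have hK : ∀ r, HasDerivAt (integralExp A) (integralExp A r * A + 1) r := fun r => by
    simpa only [integralExp_mul_add_one] using hasDerivAt_integralExp A r
  have hv_cont : Continuous v := continuous_iff_continuousAt.2 fun s => (hv s).continuousAt
  have hK_cont : Continuous (integralExp A) :=
    continuous_iff_continuousAt.2 fun r => (hK r).continuousAt
  have h := apply_sub_apply_eq_integral_of_hasDerivAt hK hv hw a b
  simp only [one_apply_eq_self, integralExp_zero, zero_apply] at h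
  rw [integral_sub (f := fun s => integralExp A (b - s) (w s))
    (((hK_cont.comp (continuous_sub_left b)).clm_apply hw).intervalIntegrable a b)
    (hv_cont.intervalIntegrable a b)] at h
  linear_combination (norm := module) h

end VariationOfConstants

namespace Matrix

variable {n : Type*} [Fintype n] [DecidableEq n]

theorem continuous_toEuclideanCLM : Continuous (toEuclideanCLM (n := n) (𝕜 := ℝ)) :=
  LinearMap.continuous_of_finiteDimensional
    (toEuclideanCLM (n := n) (𝕜 := ℝ)).toAlgEquiv.toLinearMap

theorem toEuclideanCLM_exp (Z : Matrix n n ℝ) :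
    toEuclideanCLM (𝕜 := ℝ) (NormedSpace.exp Z) =
      NormedSpace.exp (toEuclideanCLM (𝕜 := ℝ) Z) :=
  NormedSpace.map_exp _ continuous_toEuclideanCLM Z

end Matrix

section PhiFunctions

open NormedSpace Matrix

theorem phi_one_eq (Z : Matrix (Fin 3) (Fin 3) ℝ) :
    phi 1 Z = ∫ σ in (0:ℝ)..1, exp ((1 - σ) • Z) := by
  simp [phi]

theorem toEuclideanCLM_phi_one (Z : Matrix (Fin 3) (Fin 3) ℝ) :
    toEuclideanCLM (𝕜 := ℝ) (phi 1 Z) =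
      ∫ σ in (0:ℝ)..1, exp ((1 - σ) • toEuclideanCLM (𝕜 := ℝ) Z) := by
  have hc : Continuous fun σ : ℝ => exp ((1 - σ) • Z) :=
    exp_continuous.comp ((continuous_const.sub continuous_id).smul continuous_const)
  rw [phi_one_eq]
  refine ((LinearMap.toContinuousLinearMap
    (toEuclideanCLM (n := Fin 3) (𝕜 := ℝ)).toAlgEquiv.toLinearMap).intervalIntegral_comp_comm
      (hc.intervalIntegrable (μ := volume) 0 1)).symm.trans (integral_congr fun σ _ => ?_)
  exact (toEuclideanCLM_exp _).trans (by rw [map_smul])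

theorem mvec_phi_zero_smul (M : Matrix (Fin 3) (Fin 3) ℝ) (r : ℝ) (z : E3) :
    mvec (phi 0 (r • M)) z = exp (r • toEuclideanCLM (𝕜 := ℝ) M) z := by
  rw [phi, if_pos rfl]
  change toEuclideanCLM (𝕜 := ℝ) (exp (r • M)) z = _
  rw [toEuclideanCLM_exp, map_smul]

theorem smul_mvec_phi_one_smul (M : Matrix (Fin 3) (Fin 3) ℝ) (r : ℝ) (z : E3) :
    r • mvec (phi 1 (r • M)) z = integralExp (toEuclideanCLM (𝕜 := ℝ) M) r z := by
  rw [integralExp_eq_smul_integral, ← map_smul, ← toEuclideanCLM_phi_one]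
  rfl

end PhiFunctions

theorem stmt0_general (M : Matrix (Fin 3) (Fin 3) ℝ) (F : E3 → E3)
    (x : ℝ → E3) (hx : ContDiff ℝ 2 x)
    (hODE : ∀ t : ℝ, deriv (deriv x) t = mvec M (deriv x t) + F (x t))
    (t₀ h : ℝ) :
    x (t₀ + h) = x t₀ + h • mvec (phi 1 (h • M)) (deriv x t₀)
        + h ^ 2 • ∫ τ in (0:ℝ)..1,
            (1 - τ) • mvec (phi 1 (((1 - τ) * h) • M)) (F (x (t₀ + h * τ)))
      ∧
    deriv x (t₀ + h) = mvec (phi 0 (h • M)) (deriv x t₀)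
        + h • ∫ τ in (0:ℝ)..1, mvec (phi 0 (((1 - τ) * h) • M)) (F (x (t₀ + h * τ))) := by
  obtain ⟨hx_diff, -, hv_smooth⟩ := (contDiff_succ_iff_deriv (n := 1)).mp hx
  have hv : ∀ s,
      HasDerivAt (deriv x) (Matrix.toEuclideanCLM (𝕜 := ℝ) M (deriv x s) + F (x s)) s :=
    fun s => hODE s ▸ (hv_smooth.differentiable one_ne_zero s).hasDerivAt
  have hw : Continuous fun s => F (x s) := by
    have hFx : (fun s => F (x s)) = fun s => deriv (deriv x) s - mvec M (deriv x s) :=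
      funext fun s => by rw [hODE, add_sub_cancel_left]
    exact hFx ▸ (hv_smooth.continuous_deriv le_rfl).sub
      ((Matrix.toEuclideanCLM (𝕜 := ℝ) M).continuous.comp hv_smooth.continuous)
  have rescale : ∀ f : ℝ → E3,
      ∫ s in t₀..t₀ + h, f s = h • ∫ τ in (0:ℝ)..1, f (t₀ + h * τ) :=
    fun f => by rw [smul_integral_comp_add_mul, mul_zero, mul_one, add_zero]
  have hsub : ∀ τ : ℝ, t₀ + h - (t₀ + h * τ) = (1 - τ) * h := fun τ => by ring
  constructor
  · have hx_int : x (t₀ + h) = x t₀ + ∫ s in t₀..t₀ + h, deriv x s := by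
      rw [integral_eq_sub_of_hasDerivAt (fun s _ => (hx_diff s).hasDerivAt)
        (hv_smooth.continuous.intervalIntegrable _ _), add_sub_cancel]
    rw [hx_int, integral_variation_of_constants hv hw, add_sub_cancel_left, rescale, ← add_assoc,
      smul_mvec_phi_one_smul, pow_two, mul_smul]
    congr 2
    rw [← intervalIntegral.integral_smul]
    refine integral_congr fun τ _ => ?_
    rw [hsub, smul_smul, mul_comm h (1 - τ), smul_mvec_phi_one_smul]
  · rw [variation_of_constants hv hw t₀ (t₀ + h), add_sub_cancel_left, rescale,
      mvec_phi_zero_smul]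
    simp only [hsub, mvec_phi_zero_smul]

/-- variation-of-constants formula. -/
theorem stmt0 (M : Matrix (Fin 3) (Fin 3) ℝ) (F : E3 → E3) (hF : Continuous F)
    (x : ℝ → E3) (hx : ContDiff ℝ 2 x)
    (hODE : ∀ t : ℝ, deriv (deriv x) t = mvec M (deriv x t) + F (x t))
    (t₀ h : ℝ) (hh : 0 ≤ h) :
    x (t₀ + h) = x t₀ + h • mvec (phi 1 (h • M)) (deriv x t₀)
        + h ^ 2 • ∫ τ in (0:ℝ)..1,
            (1 - τ) • mvec (phi 1 (((1 - τ) * h) • M)) (F (x (t₀ + h * τ)))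
      ∧
    deriv x (t₀ + h) = mvec (phi 0 (h • M)) (deriv x t₀)
        + h • ∫ τ in (0:ℝ)..1, mvec (phi 0 (((1 - τ) * h) • M)) (F (x (t₀ + h * τ))) :=
  stmt0_general M F x hx hODE t₀ h
end
end

section
/- Let W be any square complex matrix and τ ∈ [0,1]. Then the coefficients γ_τ(W) := φ₀((1−τ)W) and β_τ(W) := (1−τ) φ₁((1−τ)W) satisfy the second symplecticity condition γ_τ(W) (φ₁(−W) − τ φ₁(−τW)) = β_τ(W) (φ₀(−W) + W φ₁(−W) − τ W φ₁(−τW)). -/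
/-!
Write `E s = exp (s • W)`. Both φ₁-values are integrals of `E`, since `c φ₁(cW) = ∫₀^c E`, and
`W ∫ₐᵇ E = E b - E a`. Hence the second factor on the right collapses to `E (-τ)`, the factor
on the left is `∫_{-1}^{-τ} E`, and since multiplying by `E a` on either side translates the
interval of integration by `a`, both sides equal `∫_{-τ}^{1-2τ} E`.
-/

open MeasureTheory intervalIntegral

noncomputable section

attribute [local instance] Matrix.linftyOpNormedAddCommGroup Matrix.linftyOpNormedRing
  Matrix.linftyOpNormedAlgebra

variable {ι : Type} [Fintype ι] [DecidableEq ι]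

/-- The matrix φ-functions for complex square matrices: `φ₀(Z) = e^Z`, and
`φ_k(Z) = ∫₀¹ e^{(1-σ)Z} σ^{k-1}/(k-1)! dσ` for `k ≥ 1`. -/
def phiC (k : ℕ) (Z : Matrix ι ι ℂ) : Matrix ι ι ℂ :=
  if k = 0 then NormedSpace.exp Z
  else ∫ σ in (0:ℝ)..1, (σ ^ (k - 1) / (Nat.factorial (k - 1)) : ℝ)
    • NormedSpace.exp ((1 - σ) • Z)

open NormedSpace

section ExpSmulIntegral

variable {𝔸 : Type*} [NormedRing 𝔸] [NormedAlgebra ℝ 𝔸] [CompleteSpace 𝔸]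

theorem exp_add_smul (x : 𝔸) (a b : ℝ) : exp ((a + b) • x) = exp (a • x) * exp (b • x) := by
  rw [add_smul]
  exact exp_add_of_commute_of_mem_ball (𝕂 := ℝ)
    (((Commute.refl x).smul_left a).smul_right b)
    (by simp [expSeries_radius_eq_top]) (by simp [expSeries_radius_eq_top])

theorem intervalIntegrable_exp_smul (x : 𝔸) (a b : ℝ) :
    IntervalIntegrable (fun s : ℝ => exp (s • x)) volume a b :=
  (differentiable_exp_smul_const ℝ x).continuous.intervalIntegrable a b

theorem mul_integral_exp_smul (x : 𝔸) (a b : ℝ) :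
    x * ∫ s in a..b, exp (s • x) = exp (b • x) - exp (a • x) := by
  have hmul := (ContinuousLinearMap.mul ℝ 𝔸 x).intervalIntegral_comp_comm
    (intervalIntegrable_exp_smul x a b)
  simp only [ContinuousLinearMap.mul_apply'] at hmul
  rw [← hmul]
  exact integral_eq_sub_of_hasDerivAt (fun t _ => hasDerivAt_exp_smul_const' x t)
    ((continuous_const.mul (differentiable_exp_smul_const ℝ x).continuous).intervalIntegrable a b)

theorem exp_smul_mul_integral_exp_smul (x : 𝔸) (a l r : ℝ) :
    exp (a • x) * ∫ s in l..r, exp (s • x) = ∫ s in (l + a)..(r + a), exp (s • x) := by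
  have hmul := (ContinuousLinearMap.mul ℝ 𝔸 (exp (a • x))).intervalIntegral_comp_comm
    (intervalIntegrable_exp_smul x l r)
  simp only [ContinuousLinearMap.mul_apply', ← exp_add_smul] at hmul
  rw [← hmul, ← integral_comp_add_right]
  simp only [add_comm]

theorem integral_exp_smul_mul_exp_smul (x : 𝔸) (a l r : ℝ) :
    (∫ s in l..r, exp (s • x)) * exp (a • x) = ∫ s in (l + a)..(r + a), exp (s • x) := by
  have hmul := ((ContinuousLinearMap.mul ℝ 𝔸).flip (exp (a • x))).intervalIntegral_comp_comm
    (intervalIntegrable_exp_smul x l r)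
  simp only [ContinuousLinearMap.flip_apply, ContinuousLinearMap.mul_apply', ← exp_add_smul] at hmul
  rw [← hmul, ← integral_comp_add_right]

end ExpSmulIntegral

section PhiFunctions

/- Integrals of matrices use the `ℝ`-structure inherited from `ℂ`, which agrees with the one in
the lemmas above only after unfolding instances: those lemmas are applied by `exact`, not `rw`. -/

variable (W : Matrix ι ι ℂ)

theorem phiC_zero : phiC 0 W = exp W := by
  simp [phiC]

theorem smul_phiC_one_smul (c : ℝ) : c • phiC 1 (c • W) = ∫ s in (0 : ℝ)..c, exp (s • W) := by
  have h : phiC 1 (c • W) = ∫ σ in (0 : ℝ)..1, (fun s : ℝ => exp ((s * c) • W)) (1 - σ) := by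
    simp [phiC, smul_smul]
  rw [h, integral_comp_sub_left (fun s : ℝ => exp ((s * c) • W)),
    intervalIntegral.smul_integral_comp_mul_right (fun s : ℝ => exp (s • W))]
  norm_num

theorem smul_phiC_one_neg_smul (c : ℝ) :
    c • phiC 1 ((-c) • W) = ∫ s in (-c)..(0 : ℝ), exp (s • W) := by
  rw [integral_symm, ← smul_phiC_one_smul, neg_smul c (phiC 1 _), neg_neg]

theorem smul_mul_phiC_one_neg_smul (c : ℝ) :
    c • (W * phiC 1 ((-c) • W)) = 1 - exp ((-c) • W) := by
  calc c • (W * phiC 1 ((-c) • W))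
      = exp ((0 : ℝ) • W) - exp ((-c) • W) := by
        rw [← mul_smul_comm, smul_phiC_one_neg_smul]
        exact mul_integral_exp_smul W (-c) 0
    _ = 1 - exp ((-c) • W) := by rw [zero_smul, exp_zero]

end PhiFunctions

theorem stmt4_general (W : Matrix ι ι ℂ) (τ : ℝ) :
    phiC 0 ((1 - τ) • W) * (phiC 1 (-W) - τ • phiC 1 ((-τ) • W))
      = ((1 - τ) • phiC 1 ((1 - τ) • W))
          * (phiC 0 (-W) + W * phiC 1 (-W) - τ • (W * phiC 1 ((-τ) • W))) := by
  have hneg : -W = (-1 : ℝ) • W := (neg_one_smul ℝ W).symm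
  have hdiff : phiC 1 (-W) - τ • phiC 1 ((-τ) • W) = ∫ s in (-1 : ℝ)..(-τ), exp (s • W) := by
    have h := smul_phiC_one_neg_smul W 1
    rw [one_smul, ← hneg] at h
    have hsplit : (∫ s in (-1 : ℝ)..(-τ), exp (s • W)) + ∫ s in (-τ)..(0 : ℝ), exp (s • W)
        = ∫ s in (-1 : ℝ)..0, exp (s • W) :=
      integral_add_adjacent_intervals (intervalIntegrable_exp_smul W _ _)
        (intervalIntegrable_exp_smul W _ _)
    rw [h, smul_phiC_one_neg_smul, ← hsplit, add_sub_cancel_right]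
  have hbracket : phiC 0 (-W) + W * phiC 1 (-W) - τ • (W * phiC 1 ((-τ) • W))
      = exp ((-τ) • W) := by
    have h := smul_mul_phiC_one_neg_smul W 1
    rw [one_smul, ← hneg] at h
    rw [h, smul_mul_phiC_one_neg_smul, phiC_zero]
    abel
  rw [phiC_zero, hdiff, hbracket, smul_phiC_one_smul]
  calc exp ((1 - τ) • W) * ∫ s in (-1 : ℝ)..(-τ), exp (s • W)
      = ∫ s in (-1 + (1 - τ))..(-τ + (1 - τ)), exp (s • W) :=
        exp_smul_mul_integral_exp_smul W _ _ _
    _ = ∫ s in (0 + -τ)..(1 - τ + -τ), exp (s • W) := by congr 1 <;> ring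
    _ = (∫ s in (0 : ℝ)..(1 - τ), exp (s • W)) * exp ((-τ) • W) :=
        (integral_exp_smul_mul_exp_smul W _ _ _).symm

/-- second symplecticity condition for the coefficients
`γ_τ(W) = φ₀((1-τ)W)`, `β_τ(W) = (1-τ)φ₁((1-τ)W)`:
`γ_τ(W)(φ₁(-W) - τφ₁(-τW)) = β_τ(W)(φ₀(-W) + Wφ₁(-W) - τWφ₁(-τW))`. -/
theorem stmt4 (W : Matrix ι ι ℂ) (τ : ℝ) (hτ : τ ∈ Set.Icc (0:ℝ) 1) :
    phiC 0 ((1 - τ) • W) * (phiC 1 (-W) - τ • phiC 1 ((-τ) • W))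
      = ((1 - τ) • phiC 1 ((1 - τ) • W))
          * (phiC 0 (-W) + W * phiC 1 (-W) - τ • (W * phiC 1 ((-τ) • W))) :=
  stmt4_general W τ
end
end
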